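/- If ρ ∈ [0,1) and the perturbation is supported at a single stage j (i.e., d and d′ agree at all stages except j), then in the setting of the stage-wise Lipschitz bound, ‖z_i(d) − z_i(d′)‖ ≤ Γ ρ^{max(|i−j|−1,0)} ‖d_j − d′_j‖, and in particular the effect on stage 1 of a perturbation at stage j decays like ρ^{j−2} for j ≥ 2. -/

import Mathlib

open Matrix

/-- Euclidean (ℓ²) norm of a finite real vector. -/
noncomputable def l2enorm {α : Type*} [Fintype α] (v : α → ℝ) : ℝ :=
  ‖(WithLp.equiv 2 (α → ℝ)).symm v‖

/-!
With `c = 2 / (Σ² + σ²)` the matrix `B = 1 - c AᵀA` is symmetric with `-ρ ≤ B ≤ ρ`, hence a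
contraction by the factor `ρ`. Multiplying `(∑_{k<m} Bᵏ)(1 - B) = 1 - Bᵐ` on the right by `A⁻¹`
gives `A⁻¹ = Bᵐ A⁻¹ + c (∑_{k<m} Bᵏ) Aᵀ`. As `A` is block lower bidiagonal, `B` is block
tridiagonal and the second term only couples stages `i, j` with `-m ≤ i - j ≤ m - 1`. For
`m = |i - j| - 1`, stage `i` of `A⁻¹ (d - d')` is thus stage `i` of `Bᵐ A⁻¹ (d - d')`, of norm at most
`ρᵐ ‖d_j - d'_j‖ / σ ≤ Γ ρᵐ ‖d_j - d'_j‖`.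
-/

section Norm

variable {ι κ : Type*} [Fintype ι] [Fintype κ]

lemma l2enorm_nonneg (v : ι → ℝ) : 0 ≤ l2enorm v := norm_nonneg _

lemma l2enorm_sq (v : ι → ℝ) : l2enorm v ^ 2 = v ⬝ᵥ v := by
  rw [l2enorm, ← real_inner_self_eq_norm_sq, EuclideanSpace.inner_eq_star_dotProduct]
  simp

lemma l2enorm_mulVec_sq (M : Matrix κ ι ℝ) (x : ι → ℝ) :
    l2enorm (M *ᵥ x) ^ 2 = x ⬝ᵥ (Mᵀ * M) *ᵥ x := by
  rw [l2enorm_sq, ← mulVec_mulVec, dotProduct_mulVec x, vecMul_transpose]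

variable [DecidableEq ι]

lemma l2enorm_mulVec_le {M : Matrix κ ι ℝ} {r : ℝ} (hr : 0 ≤ r)
    (hM : (r ^ 2 • 1 - Mᵀ * M).PosSemidef) (x : ι → ℝ) :
    l2enorm (M *ᵥ x) ≤ r * l2enorm x := by
  have h := hM.dotProduct_mulVec_nonneg x
  rw [star_trivial, sub_mulVec, dotProduct_sub, smul_mulVec, one_mulVec, dotProduct_smul,
    ← l2enorm_mulVec_sq, smul_eq_mul, ← l2enorm_sq, sub_nonneg, ← mul_pow] at h
  exact (sq_le_sq₀ (l2enorm_nonneg _) (mul_nonneg hr (l2enorm_nonneg _))).mp h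

lemma le_l2enorm_mulVec {M : Matrix κ ι ℝ} {r : ℝ} (hr : 0 ≤ r)
    (hM : (Mᵀ * M - r ^ 2 • 1).PosSemidef) (x : ι → ℝ) :
    r * l2enorm x ≤ l2enorm (M *ᵥ x) := by
  have h := hM.dotProduct_mulVec_nonneg x
  rw [star_trivial, sub_mulVec, dotProduct_sub, smul_mulVec, one_mulVec, dotProduct_smul,
    ← l2enorm_mulVec_sq, smul_eq_mul, ← l2enorm_sq, sub_nonneg, ← mul_pow] at h
  exact (sq_le_sq₀ (mul_nonneg hr (l2enorm_nonneg _)) (l2enorm_nonneg _)).mp h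

lemma l2enorm_pow_mulVec_le {M : Matrix ι ι ℝ} {r : ℝ} (hr : 0 ≤ r)
    (hM : ∀ x, l2enorm (M *ᵥ x) ≤ r * l2enorm x) (k : ℕ) (x : ι → ℝ) :
    l2enorm (M ^ k *ᵥ x) ≤ r ^ k * l2enorm x := by
  induction k with
  | zero => simp
  | succ k ih =>
    calc l2enorm (M ^ (k + 1) *ᵥ x) = l2enorm (M *ᵥ (M ^ k *ᵥ x)) := by
          rw [pow_succ', mulVec_mulVec]
      _ ≤ r * (r ^ k * l2enorm x) := (hM _).trans (mul_le_mul_of_nonneg_left ih hr)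
      _ = r ^ (k + 1) * l2enorm x := by ring

end Norm

lemma l2enorm_block_le {ι κ : Type*} [Fintype ι] [Fintype κ] (v : ι × κ → ℝ) (i : ι) :
    l2enorm (fun a => v (i, a)) ≤ l2enorm v := by
  rw [← sq_le_sq₀ (l2enorm_nonneg _) (l2enorm_nonneg _), l2enorm_sq, l2enorm_sq, dotProduct,
    dotProduct, Fintype.sum_prod_type]
  exact Finset.single_le_sum (f := fun k => ∑ a, v (k, a) * v (k, a))
    (fun k _ => Finset.sum_nonneg fun a _ => mul_self_nonneg _) (Finset.mem_univ i)

lemma l2enorm_eq_block {ι κ : Type*} [Fintype ι] [Fintype κ] {v : ι × κ → ℝ} {j : ι}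
    (hv : ∀ k ≠ j, ∀ a, v (k, a) = 0) : l2enorm v = l2enorm (fun a => v (j, a)) := by
  rw [← sq_eq_sq₀ (l2enorm_nonneg _) (l2enorm_nonneg _), l2enorm_sq, l2enorm_sq, dotProduct,
    dotProduct, Fintype.sum_prod_type, Fintype.sum_eq_single j]
  intro k hk
  simp [hv k hk]

lemma posSemidef_sq_smul_one_sub_mul_self {ι : Type*} [Fintype ι] [DecidableEq ι]
    {B : Matrix ι ι ℝ} {ρ : ℝ} (h₁ : (ρ • 1 - B).PosSemidef) (h₂ : (ρ • 1 + B).PosSemidef) :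
    (ρ ^ 2 • 1 - B * B).PosSemidef := by
  have hcomm : Commute (ρ • 1 - B) (ρ • 1 + B) :=
    ((Commute.one_right _).smul_right ρ).add_right
      (((Commute.one_left B).smul_left ρ).sub_left (Commute.refl B))
  have hprod : (ρ • 1 - B) * (ρ • 1 + B) = ρ ^ 2 • 1 - B * B := by
    simp only [Matrix.sub_mul, Matrix.mul_add, Matrix.smul_mul, Matrix.mul_smul, Matrix.one_mul,
      Matrix.mul_one]
    module
  open scoped MatrixOrder in
  exact hprod ▸ (Commute.mul_nonneg h₁.nonneg h₂.nonneg hcomm).posSemidef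

lemma l2enorm_relaxation_mulVec_le {ι : Type*} [Fintype ι] [DecidableEq ι] {H : Matrix ι ι ℝ}
    {a b : ℝ} (ha : 0 < a) (hab : a ≤ b) (hlo : (H - a • 1).PosSemidef)
    (hhi : (b • 1 - H).PosSemidef) (x : ι → ℝ) :
    l2enorm ((1 - (2 / (b + a)) • H) *ᵥ x) ≤ (b - a) / (b + a) * l2enorm x := by
  have hba : 0 < b + a := by linarith
  set c := 2 / (b + a)
  set ρ := (b - a) / (b + a)
  have hc : 0 ≤ c := by positivity
  have hρ : 0 ≤ ρ := div_nonneg (sub_nonneg.2 hab) (by positivity)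
  have h₁ : ρ • 1 - (1 - c • H) = c • (H - a • 1) := by
    have : ρ = 1 - c * a := by simp only [ρ, c]; field_simp; ring
    rw [this]; module
  have h₂ : ρ • 1 + (1 - c • H) = c • (b • 1 - H) := by
    have : ρ = c * b - 1 := by simp only [ρ, c]; field_simp; ring
    rw [this]; module
  have hH : Hᵀ = H := by
    simpa [conjTranspose_eq_transpose_of_trivial, transpose_sub] using hlo.isHermitian.eq
  have hsymm : (1 - c • H)ᵀ = 1 - c • H := by rw [transpose_sub, transpose_smul, hH, transpose_one]
  refine l2enorm_mulVec_le hρ ?_ x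
  rw [hsymm]
  exact posSemidef_sq_smul_one_sub_mul_self (h₁ ▸ hlo.smul hc) (h₂ ▸ hhi.smul hc)

lemma nonsing_inv_eq_pow_mul_add_geom_sum {ι R : Type*} [Fintype ι] [DecidableEq ι] [CommRing R]
    {A : Matrix ι ι R} (hA : IsUnit A) (c : R) (m : ℕ) :
    A⁻¹ = (1 - c • (Aᵀ * A)) ^ m * A⁻¹ +
      c • (∑ k ∈ Finset.range m, (1 - c • (Aᵀ * A)) ^ k) * Aᵀ := by
  set B := 1 - c • (Aᵀ * A)
  have hAA : A * A⁻¹ = 1 := mul_nonsing_inv A ((isUnit_iff_isUnit_det A).mp hA)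
  calc A⁻¹ = B ^ m * A⁻¹ + (1 - B ^ m) * A⁻¹ := by rw [Matrix.sub_mul, Matrix.one_mul]; abel
    _ = _ := by
      rw [← geom_sum_mul_neg, sub_sub_cancel, Matrix.mul_assoc, Matrix.smul_mul, Matrix.mul_assoc,
        hAA, Matrix.mul_one, Matrix.mul_smul, Matrix.smul_mul]

def IsBlockBanded {N : ℕ} {α β R : Type*} [Zero R] (M : Matrix (Fin N × α) (Fin N × β) R)
    (lo hi : ℤ) : Prop :=
  ∀ (i j : Fin N) (a : α) (b : β),
    ¬(lo ≤ (i : ℤ) - (j : ℤ) ∧ (i : ℤ) - (j : ℤ) ≤ hi) → M (i, a) (j, b) = 0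

namespace IsBlockBanded

variable {N : ℕ} {α β γ R : Type*}

section Zero

variable [Zero R] {M : Matrix (Fin N × α) (Fin N × β) R} {lo hi lo' hi' : ℤ}

lemma mono (hM : IsBlockBanded M lo hi) (hlo : lo' ≤ lo) (hhi : hi ≤ hi') :
    IsBlockBanded M lo' hi' :=
  fun i j a b h => hM i j a b fun h' => h ⟨hlo.trans h'.1, h'.2.trans hhi⟩

lemma transpose (hM : IsBlockBanded M lo hi) : IsBlockBanded Mᵀ (-hi) (-lo) :=
  fun i j a b h => hM j i b a fun h' => h ⟨by omega, by omega⟩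

end Zero

lemma one [Zero R] [One R] [DecidableEq α] :
    IsBlockBanded (1 : Matrix (Fin N × α) (Fin N × α) R) 0 0 := by
  intro i j a b h
  exact one_apply_ne fun e => h (by rw [(Prod.mk.inj e).1]; simp)

variable {lo hi lo' hi' : ℤ}

lemma sub [AddGroup R] {M M' : Matrix (Fin N × α) (Fin N × β) R}
    (hM : IsBlockBanded M lo hi) (hM' : IsBlockBanded M' lo hi) : IsBlockBanded (M - M') lo hi :=
  fun i j a b h => by rw [Matrix.sub_apply, hM i j a b h, hM' i j a b h, sub_zero]

lemma smul [Zero R] [SMulZeroClass R R] {M : Matrix (Fin N × α) (Fin N × β) R}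
    (hM : IsBlockBanded M lo hi) (c : R) : IsBlockBanded (c • M) lo hi :=
  fun i j a b h => by rw [Matrix.smul_apply, hM i j a b h, smul_zero]

lemma sum [AddCommMonoid R] {ι : Type*} {s : Finset ι} {M : ι → Matrix (Fin N × α) (Fin N × β) R}
    (hM : ∀ k ∈ s, IsBlockBanded (M k) lo hi) : IsBlockBanded (∑ k ∈ s, M k) lo hi :=
  fun i j a b h => by
    rw [Matrix.sum_apply]
    exact Finset.sum_eq_zero fun k hk => hM k hk i j a b h

lemma mul [Fintype β] [NonUnitalNonAssocSemiring R] {M : Matrix (Fin N × α) (Fin N × β) R}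
    {M' : Matrix (Fin N × β) (Fin N × γ) R} (hM : IsBlockBanded M lo hi)
    (hM' : IsBlockBanded M' lo' hi') : IsBlockBanded (M * M') (lo + lo') (hi + hi') := by
  intro i j a b h
  rw [mul_apply]
  refine Finset.sum_eq_zero fun ⟨k, c⟩ _ => ?_
  by_cases hik : lo ≤ (i : ℤ) - (k : ℤ) ∧ (i : ℤ) - (k : ℤ) ≤ hi
  · rw [hM' k j c b (by omega), mul_zero]
  · rw [hM i k a c hik, zero_mul]

lemma pow [Fintype α] [DecidableEq α] [Semiring R] {B : Matrix (Fin N × α) (Fin N × α) R}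
    (hB : IsBlockBanded B lo hi) (k : ℕ) :
    IsBlockBanded (B ^ k) (k * lo) (k * hi) := by
  induction k with
  | zero => simpa using one
  | succ k ih => simpa [pow_succ, add_mul] using ih.mul hB

lemma mulVec_apply_eq_zero [Fintype β] [NonUnitalNonAssocSemiring R]
    {M : Matrix (Fin N × α) (Fin N × β) R} (hM : IsBlockBanded M lo hi) {v : Fin N × β → R}
    {j : Fin N} (hv : ∀ k ≠ j, ∀ b, v (k, b) = 0) {i : Fin N}
    (hij : ¬(lo ≤ (i : ℤ) - (j : ℤ) ∧ (i : ℤ) - (j : ℤ) ≤ hi)) (a : α) :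
    (M *ᵥ v) (i, a) = 0 := by
  rw [mulVec, dotProduct]
  refine Finset.sum_eq_zero fun ⟨k, b⟩ _ => ?_
  by_cases hk : k = j
  · rw [hk, hM i j a b hij, zero_mul]
  · rw [hv k hk b, mul_zero]

end IsBlockBanded

lemma isBlockBanded_geom_sum_mul_transpose {N n : ℕ} {R : Type*} [CommRing R]
    {A : Matrix (Fin N × Fin n) (Fin N × Fin n) R} (hA : IsBlockBanded A 0 1) (c : R) (m : ℕ) :
    IsBlockBanded (c • (∑ k ∈ Finset.range m, (1 - c • (Aᵀ * A)) ^ k) * Aᵀ) (-m) (m - 1) := by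
  have hB : IsBlockBanded (1 - c • (Aᵀ * A)) (-1) 1 :=
    (IsBlockBanded.one.mono (by norm_num) (by norm_num)).sub
      (by simpa using (hA.transpose.mul hA).smul c)
  have hsum : IsBlockBanded (∑ k ∈ Finset.range m, (1 - c • (Aᵀ * A)) ^ k) (-(m - 1)) (m - 1) :=
    IsBlockBanded.sum fun k hk => by
      have hkm := Finset.mem_range.1 hk
      exact (hB.pow k).mono (by omega) (by omega)
  exact ((hsum.smul c).mul hA.transpose).mono (by omega) (by omega)

lemma nonsing_inv_mulVec_apply_eq_of_block_support {N n : ℕ} {R : Type*} [CommRing R]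
    {A : Matrix (Fin N × Fin n) (Fin N × Fin n) R} (hA : IsUnit A) (hband : IsBlockBanded A 0 1)
    (c : R) {v : Fin N × Fin n → R} {j : Fin N} (hv : ∀ k ≠ j, ∀ b, v (k, b) = 0)
    (i : Fin N) (a : Fin n) :
    (A⁻¹ *ᵥ v) (i, a) =
      ((1 - c • (Aᵀ * A)) ^ (((i : ℤ) - (j : ℤ)).natAbs - 1) *ᵥ (A⁻¹ *ᵥ v)) (i, a) := by
  set m := ((i : ℤ) - (j : ℤ)).natAbs - 1
  have hcorr := (isBlockBanded_geom_sum_mul_transpose hband c m).mulVec_apply_eq_zero hv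
    (i := i) (by omega) a
  conv_lhs => rw [nonsing_inv_eq_pow_mul_add_geom_sum hA c m]
  rw [add_mulVec, Pi.add_apply, hcorr, add_zero, mulVec_mulVec]

lemma mul_l2enorm_nonsing_inv_mulVec_le {ι : Type*} [Fintype ι] [DecidableEq ι]
    {A : Matrix ι ι ℝ} (hA : IsUnit A) {r : ℝ} (hr : 0 ≤ r)
    (hlo : (Aᵀ * A - r ^ 2 • 1).PosSemidef) (x : ι → ℝ) :
    r * l2enorm (A⁻¹ *ᵥ x) ≤ l2enorm x := by
  simpa [mulVec_mulVec, mul_nonsing_inv A ((isUnit_iff_isUnit_det A).mp hA)] using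
    le_l2enorm_mulVec hr hlo (A⁻¹ *ᵥ x)

theorem stmt_9_general {N n : ℕ} (A : Matrix (Fin N × Fin n) (Fin N × Fin n) ℝ) (sig Sig : ℝ)
    (hinv : IsUnit A) (hsig : 0 < sig) (hle : sig ≤ Sig)
    (hlo : (Aᵀ * A - sig ^ 2 • (1 : Matrix (Fin N × Fin n) (Fin N × Fin n) ℝ)).PosSemidef)
    (hhi : (Sig ^ 2 • (1 : Matrix (Fin N × Fin n) (Fin N × Fin n) ℝ) - Aᵀ * A).PosSemidef)
    (hband : ∀ (i j : Fin N) (a b : Fin n),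
      ¬(0 ≤ (i : ℤ) - (j : ℤ) ∧ (i : ℤ) - (j : ℤ) ≤ 1) → A (i, a) (j, b) = 0)
    (d d' : Fin N × Fin n → ℝ) (j : Fin N)
    (hsupp : ∀ k : Fin N, k ≠ j → ∀ a : Fin n, d (k, a) = d' (k, a)) :
    ∀ i : Fin N,
      l2enorm (fun a : Fin n => A⁻¹.mulVec d (i, a) - A⁻¹.mulVec d' (i, a)) ≤
        (Sig / sig ^ 2) *
            ((Sig ^ 2 - sig ^ 2) / (Sig ^ 2 + sig ^ 2)) ^ (((i : ℤ) - (j : ℤ)).natAbs - 1) *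
          l2enorm (fun a : Fin n => d (j, a) - d' (j, a)) := by
  intro i
  have hsq : sig ^ 2 ≤ Sig ^ 2 := pow_le_pow_left₀ hsig.le hle 2
  set ρ := (Sig ^ 2 - sig ^ 2) / (Sig ^ 2 + sig ^ 2)
  have hρ : 0 ≤ ρ := div_nonneg (sub_nonneg.2 hsq) (by positivity)
  set m := ((i : ℤ) - (j : ℤ)).natAbs - 1
  set B := 1 - (2 / (Sig ^ 2 + sig ^ 2)) • (Aᵀ * A)
  set δ := d - d'
  have hδ : ∀ k ≠ j, ∀ a, δ (k, a) = 0 := fun k hk a => sub_eq_zero.2 (hsupp k hk a)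
  have hΓ : l2enorm δ / sig ≤ Sig / sig ^ 2 * l2enorm δ := by
    rw [div_le_iff₀ hsig]; field_simp; nlinarith [l2enorm_nonneg δ]
  calc l2enorm (fun a => (A⁻¹ *ᵥ d) (i, a) - (A⁻¹ *ᵥ d') (i, a))
      = l2enorm (fun a => (B ^ m *ᵥ (A⁻¹ *ᵥ δ)) (i, a)) := by
        congr 1; funext a
        rw [← Pi.sub_apply, ← mulVec_sub]
        exact nonsing_inv_mulVec_apply_eq_of_block_support hinv hband _ hδ i a
    _ ≤ l2enorm (B ^ m *ᵥ (A⁻¹ *ᵥ δ)) := l2enorm_block_le _ i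
    _ ≤ ρ ^ m * l2enorm (A⁻¹ *ᵥ δ) :=
        l2enorm_pow_mulVec_le hρ (l2enorm_relaxation_mulVec_le (by positivity) hsq hlo hhi) m _
    _ ≤ ρ ^ m * (l2enorm δ / sig) := by
        gcongr
        rw [le_div_iff₀ hsig, mul_comm]
        exact mul_l2enorm_nonsing_inv_mulVec_le hinv hsig.le hlo δ
    _ ≤ ρ ^ m * (Sig / sig ^ 2 * l2enorm δ) := mul_le_mul_of_nonneg_left hΓ (pow_nonneg hρ m)
    _ = Sig / sig ^ 2 * ρ ^ m * l2enorm (fun a => δ (j, a)) := by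
        rw [← l2enorm_eq_block hδ]; ring

theorem stmt_9 {N n : ℕ} (A : Matrix (Fin N × Fin n) (Fin N × Fin n) ℝ) (sig Sig : ℝ)
    (hinv : IsUnit A) (hsig : 0 < sig) (hle : sig ≤ Sig)
    (hlo : (Aᵀ * A - sig ^ 2 • (1 : Matrix (Fin N × Fin n) (Fin N × Fin n) ℝ)).PosSemidef)
    (hhi : (Sig ^ 2 • (1 : Matrix (Fin N × Fin n) (Fin N × Fin n) ℝ) - Aᵀ * A).PosSemidef)
    (hband : ∀ (i j : Fin N) (a b : Fin n),
      ¬(0 ≤ (i : ℤ) - (j : ℤ) ∧ (i : ℤ) - (j : ℤ) ≤ 1) → A (i, a) (j, b) = 0)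
    (hρ : 0 ≤ (Sig ^ 2 - sig ^ 2) / (Sig ^ 2 + sig ^ 2) ∧
          (Sig ^ 2 - sig ^ 2) / (Sig ^ 2 + sig ^ 2) < 1)
    (d d' : Fin N × Fin n → ℝ) (j : Fin N)
    (hsupp : ∀ k : Fin N, k ≠ j → ∀ a : Fin n, d (k, a) = d' (k, a)) :
    ∀ i : Fin N,
      l2enorm (fun a : Fin n => A⁻¹.mulVec d (i, a) - A⁻¹.mulVec d' (i, a)) ≤
        (Sig / sig ^ 2) *
            ((Sig ^ 2 - sig ^ 2) / (Sig ^ 2 + sig ^ 2)) ^ (((i : ℤ) - (j : ℤ)).natAbs - 1) *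
          l2enorm (fun a : Fin n => d (j, a) - d' (j, a)) :=
  stmt_9_general A sig Sig hinv hsig hle hlo hhi hband d d' j hsupp
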